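/- Let ∇⁰,∇¹ be multiscale grids of dimension d∈ℕ for Γ, let α ≥ 0 and set τ := (α/d + 1/2)^{−1}, so that σ_τ = 0 if 0 ≤ α ≤ d/2 and σ_τ = α − d/2 if α > d/2. Suppose a matrix M = {m_{(j,ξ),(k,η)}}_{(j,ξ)∈∇¹,(k,η)∈∇⁰} satisfies: (i) there is c' > 0 such that m_{(j,ξ),(k,η)} = 0 whenever dist(ξ,η) > c'·(2^{−j} + 2^{−k}); and (ii) there are ε>0 and C>0 with |m_{(j,ξ),(k,η)}| ≤ C·min{2^{−(j−k)(d/2+α+ε)}, 2^{(j−k)(d/2−α+ε+σ_τ)}} for all (j,ξ)∈∇¹, (k,η)∈∇⁰. Then M ∈ ad^{α,α}_τ, and consequently M ∈ ad^{α,α}_p for every p with τ ≤ p < ∞. -/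

import Mathlib

open scoped ENNReal NNReal BigOperators

noncomputable section

/-- A multiscale grid of dimension `d` for the metric space `Γ` with finite type set `T`,
in the sense of Definition 2.1 (assumptions (A1)–(A3)). -/
structure MultiscaleGrid (Γ : Type*) [MetricSpace Γ] (T : Type*) [Fintype T] [Nonempty T]
    (d : ℕ) where
  grid : ℕ → Set (Γ × T)
  c₁ : ℝ
  c₁_pos : 0 < c₁
  /-- (A1): `∇_j` is a `c₁·2^{-j}`-net for `Γ × T` w.r.t. the pseudometric
  `dist((y,t),(y',t')) = ρ_Γ(y,y')`. -/
  net : ∀ (j : ℕ) (x : Γ × T), ∃ ξ ∈ grid j, dist ξ.1 x.1 ≤ c₁ / 2 ^ j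
  c₂ : ℝ
  c₂_pos : 0 < c₂
  sepBound : ℕ
  /-- (A2): uniform well-separatedness. -/
  sep : ∀ (j : ℕ), ∀ ξ ∈ grid j,
    {ξ' ∈ grid j | dist ξ.1 ξ'.1 ≤ c₂ / 2 ^ j}.Finite ∧
      ({ξ' ∈ grid j | dist ξ.1 ξ'.1 ≤ c₂ / 2 ^ j}).ncard ≤ sepBound
  c₃ : ℝ
  c₃_pos : 0 < c₃
  dimA : ℝ
  dimB : ℝ
  dimA_pos : 0 < dimA
  dimA_le_dimB : dimA ≤ dimB
  /-- (A3), upper bound: uniform `d`-dimensionality. -/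
  dim_upper : ∀ (j : ℕ), ∀ ξ ∈ grid j,
    {ξ' ∈ grid j | dist ξ.1 ξ'.1 ≤ c₃}.Finite ∧
      (({ξ' ∈ grid j | dist ξ.1 ξ'.1 ≤ c₃}).ncard : ℝ) ≤ dimB * 2 ^ (d * j)
  /-- (A3), lower bound. -/
  dim_lower : ∀ j : ℕ, ∃ ξ ∈ grid j,
    dimA * 2 ^ (d * j) ≤ (({ξ' ∈ grid j | dist ξ.1 ξ'.1 ≤ c₃}).ncard : ℝ)

variable {Γ T : Type*} [MetricSpace Γ] [Fintype T] [Nonempty T] {d : ℕ}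

/-- The weight `2^{j(α + d(1/2 - 1/p))}` appearing in the Besov sequence quasi-norm. -/
def besovWeight (d : ℕ) (α p : ℝ) (j : ℕ) : ℝ≥0∞ :=
  ENNReal.ofReal ((2 : ℝ) ^ ((j : ℝ) * (α + d * (1 / 2 - 1 / p))))

/-- The level-`j` `ℓ_p` norm `(Σ_{ξ∈∇_j} |a_{(j,ξ)}|^p)^{1/p}` (as an `ℝ≥0∞`-valued quantity). -/
def levelNorm (N : MultiscaleGrid Γ T d) (p : ℝ) (a : ℕ → Γ × T → ℂ) (j : ℕ) : ℝ≥0∞ :=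
  (∑' ξ : N.grid j, (‖a j ↑ξ‖₊ : ℝ≥0∞) ^ p) ^ (1 / p)

/-- The Besov sequence quasi-norm `‖a | b^α_{p,q}(∇)‖` (value `∞` allowed; `q ∈ (0,∞]`). -/
def besovNorm (N : MultiscaleGrid Γ T d) (α p : ℝ) (q : ℝ≥0∞)
    (a : ℕ → Γ × T → ℂ) : ℝ≥0∞ :=
  if q = ∞ then ⨆ j, besovWeight d α p j * levelNorm N p a j
  else (∑' j, (besovWeight d α p j * levelNorm N p a j) ^ q.toReal) ^ (1 / q.toReal)

/-- The Besov sequence space `b^α_{p,q}(∇)` as a set of coefficient arrays. -/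
def besovSpace (N : MultiscaleGrid Γ T d) (α p : ℝ) (q : ℝ≥0∞) :
    Set (ℕ → Γ × T → ℂ) :=
  {a | besovNorm N α p q a < ∞}

/-- `σ_p = d·max{1/p − 1, 0}`. -/
def sigmaP (d : ℕ) (p : ℝ) : ℝ := d * max (1 / p - 1) 0

/-- The almost-diagonality majorant `ω_{(j,ξ),(k,η)}(ε)`. -/
def adWeight (d : ℕ) (p α₀ α₁ ε : ℝ) (j : ℕ) (ξ : Γ × T) (k : ℕ) (η : Γ × T) : ℝ :=
  (2 : ℝ) ^ ((k : ℝ) * α₀ - (j : ℝ) * α₁) *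
    min ((2 : ℝ) ^ (-((j : ℝ) - (k : ℝ)) * ((d : ℝ) / 2 + ε)))
        ((2 : ℝ) ^ (((j : ℝ) - (k : ℝ)) * ((d : ℝ) / 2 + ε + sigmaP d p))) /
    (1 + min ((2 : ℝ) ^ k) ((2 : ℝ) ^ j) * dist ξ.1 η.1) ^ ((d : ℝ) + ε + sigmaP d p)

/-- The almost-diagonality estimate with fixed witnesses `ε` and `C`. -/
def adBound (N0 N1 : MultiscaleGrid Γ T d) (α₀ α₁ p ε C : ℝ)
    (m : ℕ → Γ × T → ℕ → Γ × T → ℂ) : Prop :=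
  ∀ j : ℕ, ∀ ξ ∈ N1.grid j, ∀ k : ℕ, ∀ η ∈ N0.grid k,
    ‖m j ξ k η‖ ≤ C * adWeight d p α₀ α₁ ε j ξ k η

/-- `M ∈ ad^{α₀,α₁}_p`: the matrix is almost diagonal between `b^{α₀}_{p,q}(∇⁰)` and
`b^{α₁}_{p,q}(∇¹)`. -/
def isAlmostDiagonal (N0 N1 : MultiscaleGrid Γ T d) (α₀ α₁ p : ℝ)
    (m : ℕ → Γ × T → ℕ → Γ × T → ℂ) : Prop :=
  ∃ ε > 0, ∃ C > 0, adBound N0 N1 α₀ α₁ p ε C m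

/-- (A4a): `#∇_j ∼ 2^{dj}`. -/
def A4a (N : MultiscaleGrid Γ T d) : Prop :=
  ∃ A B : ℝ, 0 < A ∧ A ≤ B ∧ ∀ j : ℕ, (N.grid j).Finite ∧
    A * 2 ^ (d * j) ≤ ((N.grid j).ncard : ℝ) ∧ ((N.grid j).ncard : ℝ) ≤ B * 2 ^ (d * j)

/-- (A4b): `#∇_j = ∞` for all `j`. -/
def A4b (N : MultiscaleGrid Γ T d) : Prop := ∀ j : ℕ, (N.grid j).Infinite

/-- Admissibility of the parameter tuple `(α,p,q)` for the grid `∇`. -/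
def Admissible (N : MultiscaleGrid Γ T d) (α p : ℝ) (q : ℝ≥0∞) : Prop :=
  0 < p ∧ (A4b N → p ≤ 2) ∧
    ((d * max 0 (1 / p - 1 / 2) < α ∧ 0 < q) ∨
      (α = d * max 0 (1 / p - 1 / 2) ∧ 0 < q ∧ q ≤ 2))


/-!
On the support of `M` the separation `dist(ξ,η)` is at most `c'(2^{-j} + 2^{-k})`, so the
spatial decay factor `(1 + 2^{min(j,k)} dist(ξ,η))^{d+ε+σ_p}` of the almost-diagonality weight
is bounded by the constant `(1 + 2c')^{d+ε+σ_τ}`, and only the scale decay has to be checked.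
Writing `t = j - k`, the factor `2^{-tα}` converts the assumed exponents `-t(d/2+α+ε)` and
`t(d/2-α+ε+σ_τ)` into the required `-t(d/2+ε)` and `t(d/2+ε+σ_p)`: for `t ≥ 0` the first assumed
bound suffices, and for `t ≤ 0` the second does, because `σ_p ≤ σ_τ` when `τ ≤ p`.
-/

open Real

lemma sigmaP_nonneg (d : ℕ) (p : ℝ) : 0 ≤ sigmaP d p :=
  mul_nonneg d.cast_nonneg (le_max_right _ _)

lemma sigmaP_anti {d : ℕ} {p q : ℝ} (hp : 0 < p) (hpq : p ≤ q) : sigmaP d q ≤ sigmaP d p := by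
  unfold sigmaP
  gcongr

lemma min_two_pow_mul_le {c r : ℝ} {j k : ℕ} (hc : 0 ≤ c)
    (hr : r ≤ c * ((2 : ℝ) ^ (-(j : ℝ)) + (2 : ℝ) ^ (-(k : ℝ)))) :
    min ((2 : ℝ) ^ k) ((2 : ℝ) ^ j) * r ≤ 2 * c := by
  have two_pow_mul_inv (n : ℕ) : (2 : ℝ) ^ n * (2 : ℝ) ^ (-(n : ℝ)) = 1 := by
    rw [rpow_neg zero_le_two, rpow_natCast, mul_inv_cancel₀ (by positivity)]
  have hj : min ((2 : ℝ) ^ k) ((2 : ℝ) ^ j) * (2 : ℝ) ^ (-(j : ℝ)) ≤ 1 :=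
    (two_pow_mul_inv j).le.trans' (by gcongr; exact min_le_right _ _)
  have hk : min ((2 : ℝ) ^ k) ((2 : ℝ) ^ j) * (2 : ℝ) ^ (-(k : ℝ)) ≤ 1 :=
    (two_pow_mul_inv k).le.trans' (by gcongr; exact min_le_left _ _)
  calc min ((2 : ℝ) ^ k) ((2 : ℝ) ^ j) * r
      ≤ min ((2 : ℝ) ^ k) ((2 : ℝ) ^ j) * (c * ((2 : ℝ) ^ (-(j : ℝ)) + (2 : ℝ) ^ (-(k : ℝ)))) := by
        gcongr
    _ = c * (min ((2 : ℝ) ^ k) ((2 : ℝ) ^ j) * (2 : ℝ) ^ (-(j : ℝ)) +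
          min ((2 : ℝ) ^ k) ((2 : ℝ) ^ j) * (2 : ℝ) ^ (-(k : ℝ))) := by ring
    _ ≤ c * (1 + 1) := by gcongr
    _ = 2 * c := by ring

lemma min_two_rpow_le_two_rpow_mul_min {a ε α s s' t : ℝ} (ha : 0 ≤ a) (hε : 0 ≤ ε)
    (hs : 0 ≤ s) (hss' : s ≤ s') :
    min ((2 : ℝ) ^ (-t * (a + α + ε))) ((2 : ℝ) ^ (t * (a - α + ε + s'))) ≤
      (2 : ℝ) ^ (-t * α) * min ((2 : ℝ) ^ (-t * (a + ε))) ((2 : ℝ) ^ (t * (a + ε + s))) := by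
  rw [mul_min_of_nonneg _ _ (by positivity), ← rpow_add two_pos, ← rpow_add two_pos]
  refine le_min ((min_le_left _ _).trans_eq (by ring_nf)) ?_
  rcases le_total t 0 with ht | ht
  · exact (min_le_right _ _).trans (rpow_le_rpow_of_exponent_le one_le_two (by nlinarith))
  · exact (min_le_left _ _).trans (rpow_le_rpow_of_exponent_le one_le_two (by nlinarith))

lemma adWeight_nonneg {Γ T : Type*} [MetricSpace Γ] (d : ℕ) (p α₀ α₁ ε : ℝ) (j : ℕ)
    (ξ : Γ × T) (k : ℕ) (η : Γ × T) : 0 ≤ adWeight d p α₀ α₁ ε j ξ k η := by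
  unfold adWeight
  positivity

lemma le_mul_adWeight_of_dist_le {Γ T : Type*} [MetricSpace Γ] {d : ℕ} {p α ε c σ : ℝ}
    {j k : ℕ} {ξ η : Γ × T} (hc : 0 ≤ c) (hε : 0 ≤ ε) (hσ : sigmaP d p ≤ σ)
    (hdist : dist ξ.1 η.1 ≤ c * ((2 : ℝ) ^ (-(j : ℝ)) + (2 : ℝ) ^ (-(k : ℝ)))) :
    min ((2 : ℝ) ^ (-((j : ℝ) - (k : ℝ)) * ((d : ℝ) / 2 + α + ε)))
        ((2 : ℝ) ^ (((j : ℝ) - (k : ℝ)) * ((d : ℝ) / 2 - α + ε + σ))) ≤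
      (1 + 2 * c) ^ ((d : ℝ) + ε + σ) * adWeight d p α α ε j ξ k η := by
  have hσp := sigmaP_nonneg d p
  have hspatial : (1 + min ((2 : ℝ) ^ k) ((2 : ℝ) ^ j) * dist ξ.1 η.1) ^ ((d : ℝ) + ε + sigmaP d p)
      ≤ (1 + 2 * c) ^ ((d : ℝ) + ε + σ) :=
    calc _ ≤ (1 + 2 * c) ^ ((d : ℝ) + ε + sigmaP d p) :=
          rpow_le_rpow (by positivity) (by linarith [min_two_pow_mul_le hc hdist]) (by positivity)
      _ ≤ (1 + 2 * c) ^ ((d : ℝ) + ε + σ) :=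
          rpow_le_rpow_of_exponent_le (by linarith) (by linarith)
  have hscale := min_two_rpow_le_two_rpow_mul_min (a := (d : ℝ) / 2) (α := α)
    (t := (j : ℝ) - (k : ℝ)) (by positivity) hε hσp hσ
  have hcoef : (2 : ℝ) ^ ((k : ℝ) * α - (j : ℝ) * α) = (2 : ℝ) ^ (-((j : ℝ) - (k : ℝ)) * α) := by
    ring_nf
  unfold adWeight
  rw [hcoef, mul_div_assoc', le_div_iff₀ (by positivity), mul_comm _ (_ * _)]
  exact mul_le_mul hscale hspatial (by positivity) (by positivity)

theorem adBound_of_local_support {Γ T : Type*} [MetricSpace Γ] [Fintype T] [Nonempty T]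
    {d : ℕ} (N0 N1 : MultiscaleGrid Γ T d) {m : ℕ → Γ × T → ℕ → Γ × T → ℂ}
    {α p ε c C σ : ℝ} (hc : 0 ≤ c) (hε : 0 ≤ ε) (hC : 0 ≤ C) (hσ : sigmaP d p ≤ σ)
    (hsupp : ∀ j : ℕ, ∀ ξ ∈ N1.grid j, ∀ k : ℕ, ∀ η ∈ N0.grid k,
      c * ((2 : ℝ) ^ (-(j : ℝ)) + (2 : ℝ) ^ (-(k : ℝ))) < dist ξ.1 η.1 → m j ξ k η = 0)
    (hbd : ∀ j : ℕ, ∀ ξ ∈ N1.grid j, ∀ k : ℕ, ∀ η ∈ N0.grid k,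
      ‖m j ξ k η‖ ≤ C *
        min ((2 : ℝ) ^ (-((j : ℝ) - (k : ℝ)) * ((d : ℝ) / 2 + α + ε)))
            ((2 : ℝ) ^ (((j : ℝ) - (k : ℝ)) * ((d : ℝ) / 2 - α + ε + σ)))) :
    adBound N0 N1 α α p ε (C * (1 + 2 * c) ^ ((d : ℝ) + ε + σ)) m := by
  intro j ξ hξ k η hη
  by_cases hfar : c * ((2 : ℝ) ^ (-(j : ℝ)) + (2 : ℝ) ^ (-(k : ℝ))) < dist ξ.1 η.1
  · rw [hsupp j ξ hξ k η hη hfar, norm_zero]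
    exact mul_nonneg (by positivity) (adWeight_nonneg _ _ _ _ _ _ _ _ _)
  · rw [mul_assoc]
    exact (hbd j ξ hξ k η hη).trans
      (by gcongr; exact le_mul_adWeight_of_dist_le hc hε hσ (not_lt.1 hfar))

theorem almost_diagonal_of_local_support_general
    {Γ T : Type*} [MetricSpace Γ] [Fintype T] [Nonempty T]
    {d : ℕ} (N0 N1 : MultiscaleGrid Γ T d)
    (α : ℝ) (hα : 0 ≤ α) (τ : ℝ) (hτ : τ = (α / d + 1 / 2)⁻¹)
    (m : ℕ → Γ × T → ℕ → Γ × T → ℂ) (c' : ℝ) (hc' : 0 < c')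
    (hsupp : ∀ j : ℕ, ∀ ξ ∈ N1.grid j, ∀ k : ℕ, ∀ η ∈ N0.grid k,
      c' * ((2 : ℝ) ^ (-(j : ℝ)) + (2 : ℝ) ^ (-(k : ℝ))) < dist ξ.1 η.1 → m j ξ k η = 0)
    (hbd : ∃ ε > 0, ∃ C > 0, ∀ j : ℕ, ∀ ξ ∈ N1.grid j, ∀ k : ℕ, ∀ η ∈ N0.grid k,
      ‖m j ξ k η‖ ≤ C *
        min ((2 : ℝ) ^ (-((j : ℝ) - (k : ℝ)) * ((d : ℝ) / 2 + α + ε)))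
            ((2 : ℝ) ^ (((j : ℝ) - (k : ℝ)) * ((d : ℝ) / 2 - α + ε + sigmaP d τ)))) :
    isAlmostDiagonal N0 N1 α α τ m ∧
      ∀ p : ℝ, τ ≤ p → isAlmostDiagonal N0 N1 α α p m := by
  obtain ⟨ε, hε, C, hC, hbd⟩ := hbd
  have hτpos : 0 < τ := hτ ▸ by positivity
  have hp : ∀ p : ℝ, τ ≤ p → isAlmostDiagonal N0 N1 α α p m := fun p hτp =>
    ⟨ε, hε, _, by positivity,
      adBound_of_local_support N0 N1 hc'.le hε.le hC.le (sigmaP_anti hτpos hτp) hsupp hbd⟩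
  exact ⟨hp τ le_rfl, hp⟩

/-- Steps 1–3 in the proof of Theorem 4.2: let `α ≥ 0`, `τ = (α/d + 1/2)^{−1}`. If the
matrix `M` vanishes whenever `dist(ξ,η) > c'(2^{−j}+2^{−k})` and satisfies
`|m_{(j,ξ),(k,η)}| ≤ C·min{2^{−(j−k)(d/2+α+ε)}, 2^{(j−k)(d/2−α+ε+σ_τ)}}`, then
`M ∈ ad^{α,α}_τ`, and consequently `M ∈ ad^{α,α}_p` for every `τ ≤ p < ∞`. -/
theorem almost_diagonal_of_local_support
    {Γ T : Type*} [MetricSpace Γ] [Nonempty Γ] [Fintype T] [Nonempty T]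
    {d : ℕ} (hd : 0 < d) (N0 N1 : MultiscaleGrid Γ T d)
    (α : ℝ) (hα : 0 ≤ α) (τ : ℝ) (hτ : τ = (α / d + 1 / 2)⁻¹)
    (m : ℕ → Γ × T → ℕ → Γ × T → ℂ) (c' : ℝ) (hc' : 0 < c')
    (hsupp : ∀ j : ℕ, ∀ ξ ∈ N1.grid j, ∀ k : ℕ, ∀ η ∈ N0.grid k,
      c' * ((2 : ℝ) ^ (-(j : ℝ)) + (2 : ℝ) ^ (-(k : ℝ))) < dist ξ.1 η.1 → m j ξ k η = 0)
    (hbd : ∃ ε > 0, ∃ C > 0, ∀ j : ℕ, ∀ ξ ∈ N1.grid j, ∀ k : ℕ, ∀ η ∈ N0.grid k,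
      ‖m j ξ k η‖ ≤ C *
        min ((2 : ℝ) ^ (-((j : ℝ) - (k : ℝ)) * ((d : ℝ) / 2 + α + ε)))
            ((2 : ℝ) ^ (((j : ℝ) - (k : ℝ)) * ((d : ℝ) / 2 - α + ε + sigmaP d τ)))) :
    isAlmostDiagonal N0 N1 α α τ m ∧
      ∀ p : ℝ, τ ≤ p → isAlmostDiagonal N0 N1 α α p m :=
  almost_diagonal_of_local_support_general N0 N1 α hα τ hτ m c' hc' hsupp hbd
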